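/- arXiv:1410.4275 — 2 statements merged into one kernel-verified Lean document; each statement's English description precedes it below -/
import Mathlib

section
/- Let X ~ N(μ, σ²) be a real Gaussian random variable with σ > 0, and let ω : [-1,1] → ℝ be a bounded symmetric probability density on [-1,1]. Define κ_σ(t; x) = ∫_{[-1,1]} ω(ζ)·exp(t²ζ²σ²/2)·cos(tζx) dζ and ψ(t; μ) = ∫_{[-1,1]} exp(√(-1)·tμζ)·ω(ζ) dζ. Then E[κ_σ(t; X)] = ψ(t; μ) for every t ∈ ℝ. -/
/-!
For `X ~ N(μ, σ²)`, taking real parts of the Gaussian characteristic function gives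
`E[cos(aX)] = cos(aμ) exp(-a²σ²/2)`. After exchanging the two integrals (Fubini), this factor
`exp(-t²ζ²σ²/2)` cancels the weight `exp(t²ζ²σ²/2)` built into `κ_σ`, so `E[κ_σ(t; X)]` equals
`∫ cos(tμζ) ω(ζ) dζ`. Since `ω` is even, `ζ ↦ sin(tμζ) ω(ζ)` is odd, so this is also `ψ(t; μ)`.
-/

open MeasureTheory ProbabilityTheory Complex Set
open scoped NNReal

theorem setIntegral_comp_neg_Icc {E : Type*} [NormedAddCommGroup E] [NormedSpace ℝ E]
    (f : ℝ → E) (c : ℝ) : ∫ x in Icc (-c) c, f (-x) = ∫ x in Icc (-c) c, f x := by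
  simpa using (Measure.measurePreserving_neg (volume : Measure ℝ)).setIntegral_preimage_emb
    (Homeomorph.neg ℝ).measurableEmbedding f (Icc (-c) c)

theorem Function.Odd.setIntegral_Icc_eq_zero {E : Type*} [NormedAddCommGroup E]
    [NormedSpace ℝ E] {f : ℝ → E} (hf : f.Odd) (c : ℝ) : ∫ x in Icc (-c) c, f x = 0 := by
  have h := setIntegral_comp_neg_Icc f c
  simp only [hf _, integral_neg] at h
  have h2 : (2 : ℝ) • ∫ x in Icc (-c) c, f x = 0 := by
    rw [two_smul]; nth_rewrite 1 [← h]; exact neg_add_cancel _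
  exact (smul_eq_zero.mp h2).resolve_left two_ne_zero

theorem Function.Even.setIntegral_cexp_I_mul_mul {w : ℝ → ℝ} (hw_even : w.Even) {c : ℝ}
    (hw : IntegrableOn w (Icc (-c) c)) (a : ℝ) :
    ∫ ζ in Icc (-c) c, cexp (I * a * ζ) * w ζ = ∫ ζ in Icc (-c) c, Real.cos (a * ζ) * w ζ := by
  have hint : IntegrableOn (fun ζ : ℝ => cexp (I * a * ζ) * w ζ) (Icc (-c) c) :=
    IntegrableOn.continuousOn_mul (by fun_prop) hw.ofReal isCompact_Icc
  have hsin : ∫ ζ in Icc (-c) c, Real.sin (a * ζ) * w ζ = 0 :=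
    Function.Odd.setIntegral_Icc_eq_zero (fun ζ => by simp [hw_even ζ]) c
  have harg : ∀ ζ : ℝ, I * a * ζ = ((a * ζ : ℝ) : ℂ) * I := fun ζ => by push_cast; ring
  rw [← setIntegral_re_add_im hint]
  simp only [harg, RCLike.re_to_complex, RCLike.im_to_complex, re_mul_ofReal, im_mul_ofReal,
    exp_ofReal_mul_I_re, exp_ofReal_mul_I_im, hsin, RCLike.I_to_complex]
  simp

theorem integral_cos_mul_gaussianReal (μ : ℝ) (v : ℝ≥0) (a : ℝ) :
    ∫ x, Real.cos (a * x) ∂gaussianReal μ v = Real.cos (a * μ) * Real.exp (-(v * a ^ 2 / 2)) := by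
  have hint : Integrable (fun x : ℝ => cexp (a * x * I)) (gaussianReal μ v) :=
    (integrable_const (1 : ℝ)).mono (by fun_prop) (by simp [← ofReal_mul])
  have h := congrArg re (charFun_gaussianReal (μ := μ) (v := v) a)
  rw [charFun_apply_real, ← RCLike.re_to_complex, ← integral_re hint] at h
  simpa [exp_re, ← ofReal_pow, mul_comm] using h

theorem integral_integral_mul_cos_gaussianReal {ν : Measure ℝ} [SFinite ν] {g : ℝ → ℝ}
    (hg : Integrable g ν) (μ : ℝ) (v : ℝ≥0) (t : ℝ) :
    ∫ x, ∫ ζ, g ζ * Real.cos (t * ζ * x) ∂ν ∂gaussianReal μ v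
      = ∫ ζ, g ζ * (Real.cos (t * ζ * μ) * Real.exp (-(v * (t * ζ) ^ 2 / 2))) ∂ν := by
  have hint : Integrable (fun p : ℝ × ℝ => g p.2 * Real.cos (t * p.2 * p.1))
      ((gaussianReal μ v).prod ν) :=
    (hg.comp_snd _).mul_bdd (c := 1) (by fun_prop) (by simp [Real.abs_cos_le_one])
  rw [integral_integral_swap hint]
  simp_rw [integral_const_mul, integral_cos_mul_gaussianReal]

theorem stmt3_general (μ σ : ℝ) (w : ℝ → ℝ)
    (hw_symm : ∀ ζ : ℝ, w (-ζ) = w ζ)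
    (hw_int : ∫ ζ in Set.Icc (-1 : ℝ) 1, w ζ = 1) :
    ∀ t : ℝ,
      ((∫ x, (∫ ζ in Set.Icc (-1 : ℝ) 1,
          w ζ * Real.exp (t ^ 2 * ζ ^ 2 * σ ^ 2 / 2) * Real.cos (t * ζ * x))
          ∂(gaussianReal μ ⟨σ ^ 2, sq_nonneg σ⟩)) : ℂ)
        = ∫ ζ in Set.Icc (-1 : ℝ) 1,
            Complex.exp (Complex.I * (t : ℂ) * (μ : ℂ) * (ζ : ℂ)) * (w ζ : ℂ) := by
  intro t
  -- a non-integrable `w` would have integral `0`, not `1`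
  have hw : IntegrableOn w (Icc (-1) 1) := Integrable.of_integral_ne_zero (by simp [hw_int])
  have hg : IntegrableOn (fun ζ => w ζ * Real.exp (t ^ 2 * ζ ^ 2 * σ ^ 2 / 2)) (Icc (-1) 1) :=
    hw.mul_continuousOn (by fun_prop) isCompact_Icc
  have harg : ∀ ζ : ℝ, I * t * μ * ζ = I * ((t * μ : ℝ) : ℂ) * ζ := fun ζ => by push_cast; ring
  simp only [← ofReal_mul, integral_complex_ofReal, harg,
    Function.Even.setIntegral_cexp_I_mul_mul hw_symm hw]
  congr 1
  refine (integral_integral_mul_cos_gaussianReal hg μ _ t).trans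
    (integral_congr_ae (ae_of_all _ fun ζ => ?_))
  have hcancel : Real.exp (t ^ 2 * ζ ^ 2 * σ ^ 2 / 2) * Real.exp (-(σ ^ 2 * (t * ζ) ^ 2 / 2))
      = 1 := by
    rw [← Real.exp_add]; ring_nf; exact Real.exp_zero
  show w ζ * Real.exp (t ^ 2 * ζ ^ 2 * σ ^ 2 / 2)
      * (Real.cos (t * ζ * μ) * Real.exp (-(σ ^ 2 * (t * ζ) ^ 2 / 2))) = Real.cos (t * μ * ζ) * w ζ
  rw [mul_right_comm t ζ μ]
  linear_combination (Real.cos (t * μ * ζ) * w ζ) * hcancel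

/-- Let `X ~ N(μ, σ²)` with `σ > 0` and let `ω` be a bounded symmetric probability density
on `[-1,1]`. With `κ_σ(t; x) = ∫_{[-1,1]} ω(ζ) exp(t²ζ²σ²/2) cos(tζx) dζ` and
`ψ(t; μ) = ∫_{[-1,1]} exp(i t μ ζ) ω(ζ) dζ`, we have `E[κ_σ(t; X)] = ψ(t; μ)` for all `t`. -/
theorem stmt3 (μ σ : ℝ) (hσ : 0 < σ) (w : ℝ → ℝ)
    (hw_meas : Measurable w)
    (hw_bdd : ∃ B : ℝ, ∀ ζ ∈ Set.Icc (-1 : ℝ) 1, |w ζ| ≤ B)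
    (hw_symm : ∀ ζ : ℝ, w (-ζ) = w ζ)
    (hw_nonneg : ∀ ζ : ℝ, 0 ≤ w ζ)
    (hw_int : ∫ ζ in Set.Icc (-1 : ℝ) 1, w ζ = 1) :
    ∀ t : ℝ,
      ((∫ x, (∫ ζ in Set.Icc (-1 : ℝ) 1,
          w ζ * Real.exp (t ^ 2 * ζ ^ 2 * σ ^ 2 / 2) * Real.cos (t * ζ * x))
          ∂(gaussianReal μ ⟨σ ^ 2, sq_nonneg σ⟩)) : ℂ)
        = ∫ ζ in Set.Icc (-1 : ℝ) 1,
            Complex.exp (Complex.I * (t : ℂ) * (μ : ℂ) * (ζ : ℂ)) * (w ζ : ℂ) :=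
  stmt3_general μ σ w hw_symm hw_int
end

section
/- If X and Y are jointly Gaussian each with variance at most σ₀² and covariance c, then for any real s, |cov[cos(sX), cos(sY)]| ≤ s²·|c|. -/
/-!
By the product-to-sum formula, `E[cos(sX) cos(sY)]` is the mean of `E cos(s(X + Y))` and
`E cos(s(X - Y))`, and for a Gaussian `Z` one has `E cos Z = exp(-Var Z / 2) cos(E Z)` (the real
part of its characteristic function). Writing `h t = exp(-max t 0 / 2)`, where the `max` comes from
the truncation `Real.toNNReal` of the variance, and `V = s²(a² + b²)`, the covariance becomes
`((h (V + 2s²c) - h V) cos(s(μX + μY)) + (h (V - 2s²c) - h V) cos(s(μX - μY))) / 2`,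
and `h` is `1/2`-Lipschitz because `exp` is `1`-Lipschitz on `(-∞, 0]`.
-/

open MeasureTheory ProbabilityTheory Real
open scoped NNReal

lemma integral_cos_gaussianReal (m : ℝ) (v : ℝ≥0) :
    ∫ x, cos x ∂gaussianReal m v = exp (-v / 2) * cos m := by
  have hint : Integrable (fun x : ℝ ↦ Complex.exp (x * Complex.I)) (gaussianReal m v) :=
    (integrable_const (1 : ℝ)).mono' (by fun_prop) (.of_forall fun x ↦ by
      simp [Complex.norm_exp_ofReal_mul_I])
  have h := congrArg Complex.re (charFun_gaussianReal (μ := m) (v := v) 1)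
  simp only [charFun_apply_real, Complex.ofReal_one, one_mul, one_pow, mul_one] at h
  rw [← RCLike.re_to_complex, ← integral_re hint] at h
  convert h using 1
  · simp [Complex.exp_ofReal_mul_I_re]
  · rw [sub_eq_add_neg, add_comm, Complex.exp_add, ← neg_div, ← Complex.ofReal_neg,
      ← Complex.ofReal_ofNat, ← Complex.ofReal_div, ← Complex.ofReal_exp,
      Complex.re_ofReal_mul, Complex.exp_ofReal_mul_I_re]

section

variable {Ω : Type*} [MeasurableSpace Ω] {P : Measure Ω} {Z : Ω → ℝ} {m : ℝ} {v : ℝ≥0}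

lemma integral_cos_of_map_eq_gaussianReal (h : P.map Z = gaussianReal m v) :
    ∫ ω, cos (Z ω) ∂P = exp (-v / 2) * cos m := by
  have hZ : AEMeasurable Z P := aemeasurable_of_map_neZero (by rw [h]; infer_instance)
  rw [← integral_cos_gaussianReal, ← h, integral_map hZ (by fun_prop)]

lemma integrable_cos_of_map_eq_gaussianReal [IsFiniteMeasure P]
    (h : P.map Z = gaussianReal m v) : Integrable (fun ω ↦ cos (Z ω)) P := by
  have hZ : AEMeasurable Z P := aemeasurable_of_map_neZero (by rw [h]; infer_instance)
  exact .of_bound (by fun_prop) 1 (.of_forall fun ω ↦ by simpa using abs_cos_le_one (Z ω))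

end

lemma abs_exp_neg_sub_exp_neg_le {p q : ℝ} (hp : 0 ≤ p) (hq : 0 ≤ q) :
    |exp (-p) - exp (-q)| ≤ |p - q| := by
  wlog hpq : p ≤ q generalizing p q
  · rw [abs_sub_comm, abs_sub_comm p]
    exact this hq hp (le_of_not_ge hpq)
  rw [abs_of_nonneg (sub_nonneg.2 (exp_le_exp.2 (neg_le_neg hpq))), abs_of_nonpos (by linarith)]
  have hsplit : exp (-q) = exp (-p) * exp (-(q - p)) := by rw [← exp_add]; ring_nf
  nlinarith [add_one_le_exp (-(q - p)), exp_le_one_iff.2 (neg_nonpos.2 hp), exp_pos (-p)]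

lemma abs_exp_neg_max_half_sub_le (x y : ℝ) :
    |exp (-max x 0 / 2) - exp (-max y 0 / 2)| ≤ |x - y| / 2 :=
  calc |exp (-max x 0 / 2) - exp (-max y 0 / 2)|
      ≤ |max x 0 / 2 - max y 0 / 2| := by
        simpa only [neg_div] using abs_exp_neg_sub_exp_neg_le (p := max x 0 / 2)
          (q := max y 0 / 2) (by positivity) (by positivity)
    _ = |max x 0 - max y 0| / 2 := by rw [← sub_div, abs_div, abs_two]
    _ ≤ |x - y| / 2 := div_le_div_of_nonneg_right (abs_max_sub_max_le_abs x y 0) zero_le_two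

lemma abs_cov_cos_gaussian_formula_le (p q r m n : ℝ) (hp : 0 ≤ p) (hq : 0 ≤ q) :
    |(exp (-max (p + q + r) 0 / 2) * cos (m + n) + exp (-max (p + q - r) 0 / 2) * cos (m - n)) / 2
      - exp (-p / 2) * cos m * (exp (-q / 2) * cos n)| ≤ |r| / 2 := by
  set h : ℝ → ℝ := fun t ↦ exp (-max t 0 / 2)
  have hprod : exp (-p / 2) * exp (-q / 2) = h (p + q) := by
    rw [← exp_add]; simp only [h, max_eq_left (add_nonneg hp hq)]; ring_nf
  have hterm (x θ : ℝ) : |(h (p + q + x) - h (p + q)) * cos θ| ≤ |x| / 2 := by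
    rw [abs_mul]
    calc |h (p + q + x) - h (p + q)| * |cos θ| ≤ |x| / 2 * 1 := by
          gcongr
          · simpa using abs_exp_neg_max_half_sub_le (p + q + x) (p + q)
          · exact abs_cos_le_one θ
      _ = |x| / 2 := mul_one _
  calc _ = |((h (p + q + r) - h (p + q)) * cos (m + n)
        + (h (p + q + -r) - h (p + q)) * cos (m - n)) / 2| := by
        rw [cos_add, cos_sub, ← sub_eq_add_neg]
        congr 1
        linear_combination (-cos m * cos n) * hprod
    _ ≤ (|r| / 2 + |-r| / 2) / 2 := by
        rw [abs_div, abs_two]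
        gcongr
        exact (abs_add_le _ _).trans (add_le_add (hterm _ _) (hterm _ _))
    _ = |r| / 2 := by rw [abs_neg]; ring

theorem stmt7_general {Ω : Type*} [MeasurableSpace Ω] (P : Measure Ω) [IsProbabilityMeasure P]
    (X Y : Ω → ℝ)
    (μX μY a b c : ℝ)
    (hgauss : ∀ u v : ℝ,
      Measure.map (fun ω => u * X ω + v * Y ω) P =
        gaussianReal (u * μX + v * μY)
          (Real.toNNReal (u ^ 2 * a ^ 2 + v ^ 2 * b ^ 2 + 2 * u * v * c)))
    (s : ℝ) :
    |(∫ ω, Real.cos (s * X ω) * Real.cos (s * Y ω) ∂P)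
        - (∫ ω, Real.cos (s * X ω) ∂P) * (∫ ω, Real.cos (s * Y ω) ∂P)|
      ≤ s ^ 2 * |c| := by
  have hcosX := integral_cos_of_map_eq_gaussianReal (by simpa using hgauss s 0)
  have hcosY := integral_cos_of_map_eq_gaussianReal (by simpa using hgauss 0 s)
  have hsum := hgauss s s
  have hdiff := hgauss s (-s)
  have hprod : ∫ ω, cos (s * X ω) * cos (s * Y ω) ∂P
      = (∫ ω, cos (s * X ω + s * Y ω) ∂P + ∫ ω, cos (s * X ω + -s * Y ω) ∂P) / 2 := by
    rw [← integral_add (integrable_cos_of_map_eq_gaussianReal hsum)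
      (integrable_cos_of_map_eq_gaussianReal hdiff), ← integral_div]
    congr 1 with ω
    rw [neg_mul, ← sub_eq_add_neg, cos_add, cos_sub]; ring
  rw [hprod, hcosX, hcosY, integral_cos_of_map_eq_gaussianReal hsum,
    integral_cos_of_map_eq_gaussianReal hdiff]
  have key := abs_cov_cos_gaussian_formula_le (s ^ 2 * a ^ 2) (s ^ 2 * b ^ 2) (2 * s ^ 2 * c)
    (s * μX) (s * μY) (by positivity) (by positivity)
  rw [Real.coe_toNNReal (s ^ 2 * a ^ 2) (by positivity),
    Real.coe_toNNReal (s ^ 2 * b ^ 2) (by positivity), Real.coe_toNNReal', Real.coe_toNNReal']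
  convert key using 2
  · ring_nf
  · rw [abs_mul, abs_mul, abs_two, abs_sq]; ring

/-- If `X` and `Y` are jointly Gaussian, each with variance at most `σ₀²`, and
covariance `c`, then for any real `s`, `|cov[cos(sX), cos(sY)]| ≤ s² |c|`. -/
theorem stmt7 {Ω : Type*} [MeasurableSpace Ω] (P : Measure Ω) [IsProbabilityMeasure P]
    (X Y : Ω → ℝ) (hX : Measurable X) (hY : Measurable Y)
    (μX μY a b c σ₀ : ℝ) (ha : a ^ 2 ≤ σ₀ ^ 2) (hb : b ^ 2 ≤ σ₀ ^ 2)
    (hgauss : ∀ u v : ℝ,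
      Measure.map (fun ω => u * X ω + v * Y ω) P =
        gaussianReal (u * μX + v * μY)
          (Real.toNNReal (u ^ 2 * a ^ 2 + v ^ 2 * b ^ 2 + 2 * u * v * c)))
    (s : ℝ) :
    |(∫ ω, Real.cos (s * X ω) * Real.cos (s * Y ω) ∂P)
        - (∫ ω, Real.cos (s * X ω) ∂P) * (∫ ω, Real.cos (s * Y ω) ∂P)|
      ≤ s ^ 2 * |c| :=
  stmt7_general P X Y μX μY a b c hgauss s
end
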